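/- Let φ: X → H be a continuous map into a Hilbert space with ‖φ(x)‖ = 1 for all x, and suppose the associated barycenter map is injective on probability measures (the kernel is characteristic). Then the barycenter map is injective on all finite complex Borel measures whose embedding is defined via the operator-valued map x ↦ |φ(x)⟩⟨φ(x)| into trace class; i.e., if two finite complex measures m₁, m₂ satisfy ∫|φ(x)⟩⟨φ(x)| dm₁ = ∫|φ(x)⟩⟨φ(x)| dm₂ (as Bochner integrals in trace class), then m₁ = m₂. -/

import Mathlib

/-!
Write `T(m) = ∫ |φ x⟩⟨φ x| dm`. Parseval's identity and `‖φ x‖ = 1` give `tr T(m) = m(X)`, so two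
finite positive measures with the same barycenter have the same mass and, once normalised, are
equal by the characteristic property. For complex densities, the symmetry
`conj ⟪u, ρ_x w⟫ = ⟪w, ρ_x u⟫` passes the barycenter identity for `f₁ μ₁` and `f₂ μ₂` on to the
real and imaginary parts. For real densities `g₁, g₂` it becomes an identity between the positive
measures `g₁⁺ μ₁ + g₂⁻ μ₂` and `g₂⁺ μ₂ + g₁⁻ μ₁`, which are therefore equal.
-/

open MeasureTheory Set
open scoped InnerProductSpace ComplexConjugate

section HilbertSpace

variable {𝕜 E ι : Type*} [RCLike 𝕜] [NormedAddCommGroup E] [InnerProductSpace 𝕜 E]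

theorem Orthonormal.countable [TopologicalSpace.SeparableSpace E] {v : ι → E}
    (hv : Orthonormal 𝕜 v) : Countable ι := by
  have hdist : Pairwise fun i j => 1 ≤ dist (v i) (v j) := by
    intro i j hij
    have hsq : ‖v i - v j‖ ^ 2 = 2 := by
      rw [@norm_sub_sq 𝕜]
      simp [hv.1, hv.2 hij]
      norm_num
    rw [dist_eq_norm]
    nlinarith [norm_nonneg (v i - v j)]
  have hdisj : Pairwise (Function.onFun Disjoint fun i => Metric.ball (v i) (1 / 2)) :=
    fun i j hij => Metric.ball_disjoint_ball (by linarith [hdist hij])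
  exact hdisj.countable_of_isOpen_disjoint (fun _ => Metric.isOpen_ball)
    (fun _ => Metric.nonempty_ball.2 one_half_pos)

theorem HilbertBasis.hasSum_norm_inner_sq [CompleteSpace E] (b : HilbertBasis ι 𝕜 E) (x : E) :
    HasSum (fun i => ‖⟪b i, x⟫_𝕜‖ ^ 2) (‖x‖ ^ 2) := by
  simpa [b.repr_apply_apply] using lp.hasSum_norm (p := 2) (by norm_num) (b.repr x)

end HilbertSpace

section Densities

variable {X : Type*} [MeasurableSpace X] {μ : Measure X}

theorem integral_smul_eq_integral_withDensity_sub {E : Type*} [NormedAddCommGroup E]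
    [NormedSpace ℝ E] {g : X → ℝ} {F : X → E} (hg : AEMeasurable g μ)
    (hF : AEStronglyMeasurable F μ) (hgF : Integrable (fun x => g x • F x) μ) :
    ∫ x, g x • F x ∂μ = ∫ x, F x ∂μ.withDensity (fun x => ENNReal.ofReal (g x)) -
      ∫ x, F x ∂μ.withDensity (fun x => ENNReal.ofReal (-g x)) := by
  have hpart (p : X → ℝ) (hp : AEMeasurable p μ) (hpg : ∀ x, max (p x) 0 ≤ |g x|) :
      Integrable (fun x => max (p x) 0 • F x) μ :=
    hgF.mono ((hp.max aemeasurable_const).aestronglyMeasurable.smul hF) <| ae_of_all _ fun x => by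
      rw [norm_smul, norm_smul, Real.norm_of_nonneg (le_max_right _ _), Real.norm_eq_abs]
      gcongr
      exact hpg x
  have hg' : AEMeasurable (fun x => -g x) μ := hg.neg
  rw [integral_withDensity_eq_integral_toReal_smul₀ hg.ennreal_ofReal
      (ae_of_all _ fun _ => ENNReal.ofReal_lt_top),
    integral_withDensity_eq_integral_toReal_smul₀ hg'.ennreal_ofReal
      (ae_of_all _ fun _ => ENNReal.ofReal_lt_top)]
  simp only [ENNReal.toReal_ofReal']
  rw [← integral_sub (hpart g hg fun x => max_le (le_abs_self _) (abs_nonneg _))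
      (hpart _ hg' fun x => max_le (neg_le_abs _) (abs_nonneg _))]
  simp only [← sub_smul, max_zero_sub_max_neg_zero_eq_self]

theorem setIntegral_eq_measureReal_withDensity_sub {g : X → ℝ} (hg : Integrable g μ) {s : Set X}
    (hs : MeasurableSet s) :
    ∫ x in s, g x ∂μ = (μ.withDensity fun x => ENNReal.ofReal (g x)).real s -
      (μ.withDensity fun x => ENNReal.ofReal (-g x)).real s := by
  simp only [measureReal_def, withDensity_apply _ hs]
  exact integral_eq_lintegral_pos_part_sub_lintegral_neg_part hg.integrableOn

end Densities

section RankOneCoeff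

variable {X H : Type*} [NormedAddCommGroup H] [InnerProductSpace ℂ H]

/-- The matrix coefficient `⟪u, ρ_x w⟫` of the rank-one projection `ρ_x = |φ x⟩⟨φ x|`. -/
noncomputable def rankOneCoeff (φ : X → H) (u w : H) (x : X) : ℂ :=
  ⟪u, φ x⟫_ℂ * ⟪φ x, w⟫_ℂ

theorem norm_rankOneCoeff_le {φ : X → H} (hnorm : ∀ x, ‖φ x‖ ≤ 1) (u w : H) (x : X) :
    ‖rankOneCoeff φ u w x‖ ≤ ‖u‖ * ‖w‖ := by
  rw [rankOneCoeff, norm_mul]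
  gcongr
  · exact (norm_inner_le_norm u (φ x)).trans (mul_le_of_le_one_right (norm_nonneg u) (hnorm x))
  · exact (norm_inner_le_norm (φ x) w).trans (mul_le_of_le_one_left (norm_nonneg w) (hnorm x))

theorem conj_rankOneCoeff (φ : X → H) (u w : H) (x : X) :
    conj (rankOneCoeff φ u w x) = rankOneCoeff φ w u x := by
  rw [rankOneCoeff, rankOneCoeff, map_mul, inner_conj_symm, inner_conj_symm, mul_comm]

theorem rankOneCoeff_self (φ : X → H) (u : H) (x : X) :
    rankOneCoeff φ u u x = ((‖⟪u, φ x⟫_ℂ‖ ^ 2 : ℝ) : ℂ) := by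
  rw [rankOneCoeff, ← inner_conj_symm u (φ x), Complex.conj_mul', Complex.norm_conj]
  push_cast
  rfl

theorem continuous_rankOneCoeff [TopologicalSpace X] {φ : X → H} (hφ : Continuous φ) (u w : H) :
    Continuous (rankOneCoeff φ u w) :=
  (continuous_const.inner hφ).mul (hφ.inner continuous_const)

variable [MeasurableSpace X] {μ : Measure X}

def IsCharacteristic (φ : X → H) : Prop :=
  ∀ P Q : Measure X, IsProbabilityMeasure P → IsProbabilityMeasure Q →
    (∀ u w, ∫ x, rankOneCoeff φ u w x ∂P = ∫ x, rankOneCoeff φ u w x ∂Q) → P = Q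

theorem integral_rankOneCoeff_self (φ : X → H) (u : H) :
    ∫ x, rankOneCoeff φ u u x ∂μ = ((∫ x, ‖⟪u, φ x⟫_ℂ‖ ^ 2 ∂μ : ℝ) : ℂ) := by
  simp only [rankOneCoeff_self]
  exact integral_ofReal

theorem integral_conj_mul_rankOneCoeff (φ : X → H) (f : X → ℂ) (u w : H) :
    ∫ x, conj (f x) * rankOneCoeff φ u w x ∂μ = conj (∫ x, f x * rankOneCoeff φ w u x ∂μ) := by
  simp only [← integral_conj, map_mul, conj_rankOneCoeff]

variable [TopologicalSpace X] [OpensMeasurableSpace X] {φ : X → H}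

theorem memLp_top_rankOneCoeff (hφ : Continuous φ) (hnorm : ∀ x, ‖φ x‖ ≤ 1)
    (u w : H) (μ : Measure X) : MemLp (rankOneCoeff φ u w) ⊤ μ :=
  memLp_top_of_bound (continuous_rankOneCoeff hφ u w).aestronglyMeasurable _
    (ae_of_all _ (norm_rankOneCoeff_le hnorm u w))

theorem integrable_mul_rankOneCoeff (hφ : Continuous φ) (hnorm : ∀ x, ‖φ x‖ ≤ 1) {f : X → ℂ}
    (hf : Integrable f μ) (u w : H) : Integrable (fun x => f x * rankOneCoeff φ u w x) μ :=
  hf.smul_of_top_left (memLp_top_rankOneCoeff hφ hnorm u w μ)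

theorem integral_re_smul_rankOneCoeff (hφ : Continuous φ) (hnorm : ∀ x, ‖φ x‖ ≤ 1)
    {f : X → ℂ} (hf : Integrable f μ) (u w : H) :
    ∫ x, (f x).re • rankOneCoeff φ u w x ∂μ =
      (∫ x, f x * rankOneCoeff φ u w x ∂μ + conj (∫ x, f x * rankOneCoeff φ w u x ∂μ)) / 2 := by
  have hf' : Integrable (fun x => conj (f x)) μ := Complex.conjLIE.integrable_comp_iff.2 hf
  rw [← integral_conj_mul_rankOneCoeff,
    ← integral_add (integrable_mul_rankOneCoeff hφ hnorm hf u w)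
      (integrable_mul_rankOneCoeff hφ hnorm hf' u w), ← integral_div]
  congr with x
  rw [Complex.real_smul, Complex.re_eq_add_conj]
  ring

theorem integral_im_smul_rankOneCoeff (hφ : Continuous φ) (hnorm : ∀ x, ‖φ x‖ ≤ 1)
    {f : X → ℂ} (hf : Integrable f μ) (u w : H) :
    ∫ x, (f x).im • rankOneCoeff φ u w x ∂μ = (∫ x, f x * rankOneCoeff φ u w x ∂μ -
      conj (∫ x, f x * rankOneCoeff φ w u x ∂μ)) / (2 * Complex.I) := by
  have hf' : Integrable (fun x => conj (f x)) μ := Complex.conjLIE.integrable_comp_iff.2 hf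
  rw [← integral_conj_mul_rankOneCoeff,
    ← integral_sub (integrable_mul_rankOneCoeff hφ hnorm hf u w)
      (integrable_mul_rankOneCoeff hφ hnorm hf' u w), ← integral_div]
  congr with x
  rw [Complex.real_smul, Complex.im_eq_sub_conj]
  ring

theorem integrable_norm_inner_sq [IsFiniteMeasure μ] (hφ : Continuous φ)
    (hnorm : ∀ x, ‖φ x‖ ≤ 1) (u : H) : Integrable (fun x => ‖⟪u, φ x⟫_ℂ‖ ^ 2) μ := by
  have := ((memLp_top_rankOneCoeff hφ hnorm u u μ).integrable le_top).norm
  simpa [rankOneCoeff_self] using this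

theorem measure_univ_eq_tsum_integral_norm_inner_sq [CompleteSpace H] {ι : Type*} [Countable ι]
    (b : HilbertBasis ι ℂ H) (hφ : Continuous φ) (hnorm : ∀ x, ‖φ x‖ = 1)
    (μ : Measure X) [IsFiniteMeasure μ] :
    μ univ = ∑' i, ENNReal.ofReal (∫ x, ‖⟪b i, φ x⟫_ℂ‖ ^ 2 ∂μ) := by
  have hparseval (x : X) : ∑' i, ENNReal.ofReal (‖⟪b i, φ x⟫_ℂ‖ ^ 2) = 1 := by
    have hsum := b.hasSum_norm_inner_sq (φ x)
    rw [← ENNReal.ofReal_tsum_of_nonneg (fun _ => by positivity) hsum.summable, hsum.tsum_eq,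
      hnorm x, one_pow, ENNReal.ofReal_one]
  calc μ univ = ∫⁻ x, ∑' i, ENNReal.ofReal (‖⟪b i, φ x⟫_ℂ‖ ^ 2) ∂μ := by
        simp only [hparseval, lintegral_const, one_mul]
    _ = ∑' i, ∫⁻ x, ENNReal.ofReal (‖⟪b i, φ x⟫_ℂ‖ ^ 2) ∂μ :=
        lintegral_tsum fun i => (by fun_prop : Continuous fun x => ‖⟪b i, φ x⟫_ℂ‖ ^ 2)
          |>.measurable.ennreal_ofReal.aemeasurable
    _ = ∑' i, ENNReal.ofReal (∫ x, ‖⟪b i, φ x⟫_ℂ‖ ^ 2 ∂μ) := by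
        congr with i
        exact (ofReal_integral_eq_lintegral_ofReal
          (integrable_norm_inner_sq hφ (fun x => (hnorm x).le) _)
          (ae_of_all _ fun _ => by positivity)).symm

theorem measure_univ_eq_of_integral_rankOneCoeff_eq [CompleteSpace H]
    [TopologicalSpace.SeparableSpace H] (hφ : Continuous φ) (hnorm : ∀ x, ‖φ x‖ = 1)
    {σ τ : Measure X} [IsFiniteMeasure σ] [IsFiniteMeasure τ]
    (h : ∀ u w, ∫ x, rankOneCoeff φ u w x ∂σ = ∫ x, rankOneCoeff φ u w x ∂τ) :
    σ univ = τ univ := by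
  obtain ⟨_, b, -⟩ := exists_hilbertBasis ℂ H
  have := b.orthonormal.countable
  simp only [measure_univ_eq_tsum_integral_norm_inner_sq b hφ hnorm]
  congr with i
  have := h (b i) (b i)
  rw [integral_rankOneCoeff_self, integral_rankOneCoeff_self] at this
  rw [Complex.ofReal_injective this]

theorem eq_of_integral_rankOneCoeff_eq [CompleteSpace H] [TopologicalSpace.SeparableSpace H]
    (hφ : Continuous φ) (hnorm : ∀ x, ‖φ x‖ = 1)
    (hchar : IsCharacteristic φ)
    {σ τ : Measure X} [IsFiniteMeasure σ] [IsFiniteMeasure τ]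
    (h : ∀ u w, ∫ x, rankOneCoeff φ u w x ∂σ = ∫ x, rankOneCoeff φ u w x ∂τ) : σ = τ := by
  have hmass := measure_univ_eq_of_integral_rankOneCoeff_eq hφ hnorm h
  rcases eq_zero_or_neZero σ with rfl | hσ
  · exact (Measure.measure_univ_eq_zero.1 (by simpa using hmass.symm)).symm
  have : NeZero τ :=
    ⟨fun hτ => hσ.out (Measure.measure_univ_eq_zero.1 (by simpa [hτ] using hmass))⟩
  have hnormalized : (σ univ)⁻¹ • σ = (τ univ)⁻¹ • τ :=
    hchar _ _ inferInstance inferInstance fun u w => by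
      rw [integral_smul_measure, integral_smul_measure, h, hmass]
  have hσ0 : σ univ ≠ 0 := NeZero.ne _
  rw [← hmass] at hnormalized
  calc σ = σ univ • ((σ univ)⁻¹ • σ) := by
        rw [smul_smul, ENNReal.mul_inv_cancel hσ0 (measure_ne_top _ _), one_smul]
    _ = τ := by
        rw [hnormalized, smul_smul, ENNReal.mul_inv_cancel hσ0 (measure_ne_top _ _), one_smul]

theorem setIntegral_eq_of_integral_smul_rankOneCoeff_eq [CompleteSpace H]
    [TopologicalSpace.SeparableSpace H] (hφ : Continuous φ) (hnorm : ∀ x, ‖φ x‖ = 1)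
    (hchar : IsCharacteristic φ)
    {μ₁ μ₂ : Measure X} [IsFiniteMeasure μ₁] [IsFiniteMeasure μ₂] {g₁ g₂ : X → ℝ}
    (hg₁ : Integrable g₁ μ₁) (hg₂ : Integrable g₂ μ₂)
    (h : ∀ u w, ∫ x, g₁ x • rankOneCoeff φ u w x ∂μ₁ = ∫ x, g₂ x • rankOneCoeff φ u w x ∂μ₂)
    {s : Set X} (hs : MeasurableSet s) : ∫ x in s, g₁ x ∂μ₁ = ∫ x in s, g₂ x ∂μ₂ := by
  have := isFiniteMeasure_withDensity_ofReal hg₁.2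
  have := isFiniteMeasure_withDensity_ofReal hg₁.neg.2
  have := isFiniteMeasure_withDensity_ofReal hg₂.2
  have := isFiniteMeasure_withDensity_ofReal hg₂.neg.2
  have hk (u w : H) (ν : Measure X) := memLp_top_rankOneCoeff hφ (fun x => (hnorm x).le) u w ν
  have hsplit {ν : Measure X} {g : X → ℝ} (hg : Integrable g ν) (u w : H) :=
    integral_smul_eq_integral_withDensity_sub hg.1.aemeasurable
      (hk u w ν).aestronglyMeasurable (hg.smul_of_top_left (hk u w ν))
  have hbalance :
      μ₁.withDensity (fun x => .ofReal (g₁ x)) + μ₂.withDensity (fun x => .ofReal (-g₂ x))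
        = μ₂.withDensity (fun x => .ofReal (g₂ x)) + μ₁.withDensity (fun x => .ofReal (-g₁ x)) := by
    refine eq_of_integral_rankOneCoeff_eq hφ hnorm hchar fun u w => ?_
    have := h u w
    rw [hsplit hg₁, hsplit hg₂] at this
    rw [integral_add_measure ((hk u w _).integrable le_top) ((hk u w _).integrable le_top),
      integral_add_measure ((hk u w _).integrable le_top) ((hk u w _).integrable le_top)]
    linear_combination this
  have hs_balance := congrArg (fun ν : Measure X => ν.real s) hbalance
  rw [measureReal_add_apply, measureReal_add_apply] at hs_balance
  rw [setIntegral_eq_measureReal_withDensity_sub hg₁ hs,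
    setIntegral_eq_measureReal_withDensity_sub hg₂ hs]
  linarith

end RankOneCoeff

theorem barycenter_injective_complexMeasures_general
    {X : Type*} [TopologicalSpace X]
    [MeasurableSpace X] [BorelSpace X]
    {H : Type*} [NormedAddCommGroup H] [InnerProductSpace ℂ H] [CompleteSpace H]
    [TopologicalSpace.SeparableSpace H]
    (φ : X → H) (hφ : Continuous φ) (hnorm : ∀ x, ‖φ x‖ = 1)
    (hchar : ∀ (P Q : Measure X), IsProbabilityMeasure P → IsProbabilityMeasure Q →
      (∀ u w : H, ∫ x, ⟪u, φ x⟫_ℂ * ⟪φ x, w⟫_ℂ ∂P = ∫ x, ⟪u, φ x⟫_ℂ * ⟪φ x, w⟫_ℂ ∂Q) →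
      P = Q)
    (μ₁ μ₂ : Measure X) [IsFiniteMeasure μ₁] [IsFiniteMeasure μ₂]
    (f₁ f₂ : X → ℂ) (hf₁ : Integrable f₁ μ₁) (hf₂ : Integrable f₂ μ₂)
    (heq : ∀ u w : H,
      ∫ x, f₁ x * (⟪u, φ x⟫_ℂ * ⟪φ x, w⟫_ℂ) ∂μ₁ =
      ∫ x, f₂ x * (⟪u, φ x⟫_ℂ * ⟪φ x, w⟫_ℂ) ∂μ₂) :
    ∀ s : Set X, MeasurableSet s → ∫ x in s, f₁ x ∂μ₁ = ∫ x in s, f₂ x ∂μ₂ := by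
  intro s hs
  have heq' (u w : H) :
      ∫ x, f₁ x * rankOneCoeff φ u w x ∂μ₁ = ∫ x, f₂ x * rankOneCoeff φ u w x ∂μ₂ :=
    heq u w
  have hnorm' : ∀ x, ‖φ x‖ ≤ 1 := fun x => (hnorm x).le
  have hre (u w : H) :
      ∫ x, (f₁ x).re • rankOneCoeff φ u w x ∂μ₁ = ∫ x, (f₂ x).re • rankOneCoeff φ u w x ∂μ₂ := by
    rw [integral_re_smul_rankOneCoeff hφ hnorm' hf₁, integral_re_smul_rankOneCoeff hφ hnorm' hf₂,
      heq', heq']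
  have him (u w : H) :
      ∫ x, (f₁ x).im • rankOneCoeff φ u w x ∂μ₁ = ∫ x, (f₂ x).im • rankOneCoeff φ u w x ∂μ₂ := by
    rw [integral_im_smul_rankOneCoeff hφ hnorm' hf₁, integral_im_smul_rankOneCoeff hφ hnorm' hf₂,
      heq', heq']
  rw [← setIntegral_re_add_im hf₁.integrableOn, ← setIntegral_re_add_im hf₂.integrableOn,
    setIntegral_eq_of_integral_smul_rankOneCoeff_eq hφ hnorm hchar hf₁.re hf₂.re hre hs,
    setIntegral_eq_of_integral_smul_rankOneCoeff_eq hφ hnorm hchar hf₁.im hf₂.im him hs]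

/-- If the barycenter embedding `m ↦ ∫ |φ(x)⟩⟨φ(x)| dm(x)` (expressed here through its
matrix elements `⟨u, T(m) w⟩ = ∫ ⟨u, φ x⟩⟨φ x, w⟩ dm`) is injective on probability
measures (i.e. the kernel is characteristic), then it is injective on all finite complex
Borel measures, represented as densities `f` with respect to finite positive measures. -/
theorem barycenter_injective_complexMeasures
    {X : Type*} [TopologicalSpace X] [PolishSpace X]
    [MeasurableSpace X] [BorelSpace X]
    {H : Type*} [NormedAddCommGroup H] [InnerProductSpace ℂ H] [CompleteSpace H]
    [TopologicalSpace.SeparableSpace H]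
    (φ : X → H) (hφ : Continuous φ) (hnorm : ∀ x, ‖φ x‖ = 1)
    (hchar : ∀ (P Q : Measure X), IsProbabilityMeasure P → IsProbabilityMeasure Q →
      (∀ u w : H, ∫ x, ⟪u, φ x⟫_ℂ * ⟪φ x, w⟫_ℂ ∂P = ∫ x, ⟪u, φ x⟫_ℂ * ⟪φ x, w⟫_ℂ ∂Q) →
      P = Q)
    (μ₁ μ₂ : Measure X) [IsFiniteMeasure μ₁] [IsFiniteMeasure μ₂]
    (f₁ f₂ : X → ℂ) (hf₁ : Integrable f₁ μ₁) (hf₂ : Integrable f₂ μ₂)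
    (heq : ∀ u w : H,
      ∫ x, f₁ x * (⟪u, φ x⟫_ℂ * ⟪φ x, w⟫_ℂ) ∂μ₁ =
      ∫ x, f₂ x * (⟪u, φ x⟫_ℂ * ⟪φ x, w⟫_ℂ) ∂μ₂) :
    ∀ s : Set X, MeasurableSet s → ∫ x in s, f₁ x ∂μ₁ = ∫ x in s, f₂ x ∂μ₂ :=
  barycenter_injective_complexMeasures_general φ hφ hnorm hchar μ₁ μ₂ f₁ f₂ hf₁ hf₂ heq
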